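/- The map ψ restricts to a bijection between the set C_n of Łukasiewicz paths of length n with no flat step at positive height and in which every up step is immediately followed by a down step, and the set of Motzkin paths of length n avoiding the consecutive pattern UU. -/

import Mathlib

/-!
A path of `C` is empty, a flat step followed by a path of `C`, or an up step `U_k`, which is
immediately followed by a down step and then, by first passages, by `L₂ D ⋯ L_k D L`; the blocks
`Lᵢ` lie at positive height and therefore have no flat steps. On such a path `ψ` returns
`U F ψ(L₂) ⋯ F ψ(L_k) D ψ(L)`. Dually, a `UU`-avoiding Motzkin path is empty, `F m'`, or `U A D m'`
with `A` its first return, and `A`, which cannot start with `U`, splits uniquely at its flat steps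
at height `0` into `F M₂ ⋯ F M_k` with blocks `Mᵢ` without flat steps at height `0`. These
decompositions are unique, so induction on the length shows simultaneously that `ψ` is a bijection
from `C` onto the `UU`-avoiding Motzkin paths and from the flatless paths of `C` onto those without
flat steps at height `0`, preserving lengths.
-/

/-- A Łukasiewicz path: vertical step components, each `≥ -1`, all partial sums
nonnegative, total sum `0`. -/
def IsLukas (w : List ℤ) : Prop :=
  (∀ s ∈ w, -1 ≤ s) ∧ (∀ k, 0 ≤ (w.take k).sum) ∧ w.sum = 0

/-- A Motzkin path: a Łukasiewicz path using only steps `(1,1)`, `(1,0)`, `(1,-1)`. -/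
def IsMotzkin (w : List ℤ) : Prop :=
  IsLukas w ∧ ∀ s ∈ w, s ≤ 1

/-- No flat step at positive height: every flat step starts at ordinate `0`. -/
def NoFlatAtPosHeight (w : List ℤ) : Prop :=
  ∀ j : ℕ, w[j]? = some 0 → (w.take j).sum = 0

/-- Every up step is immediately followed by a down step. -/
def UpThenDown (w : List ℤ) : Prop :=
  ∀ j : ℕ, ∀ s : ℤ, w[j]? = some s → 1 ≤ s → w[j + 1]? = some (-1)

/-- Avoiding the consecutive pattern `UU`. -/
def AvoidsUU (w : List ℤ) : Prop :=
  ∀ j : ℕ, ¬(w[j]? = some 1 ∧ w[j + 1]? = some 1)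

/-- `ψ` satisfies the defining recursive equations: `ψ(ε) = ε`,
`ψ(F L) = F ψ(L)`, and
`ψ(U_k L₁ D L₂ D … L_k D L) = U ψ(L₁) F ψ(L₂) F … ψ(L_k) D ψ(L)`. -/
def PsiEquations (ψ : List ℤ → List ℤ) : Prop :=
  ψ [] = [] ∧
  (∀ L : List ℤ, IsLukas L → ψ (0 :: L) = 0 :: ψ L) ∧
  (∀ (Ls : List (List ℤ)) (L : List ℤ), Ls ≠ [] →
    (∀ M ∈ Ls, IsLukas M) → IsLukas L →
    ψ ((Ls.length : ℤ) :: ((Ls.map fun M => M ++ [(-1 : ℤ)]).flatten ++ L)) =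
      1 :: ((List.intersperse [(0 : ℤ)] (Ls.map ψ)).flatten ++ (-1 : ℤ) :: ψ L))

open List

theorem List.eq_of_map_eq_of_injOn {α β : Type*} {f : α → β} {s : Set α} (hf : Set.InjOn f s)
    {l₁ l₂ : List α} (h₁ : ∀ x ∈ l₁, x ∈ s) (h₂ : ∀ x ∈ l₂, x ∈ s) (e : l₁.map f = l₂.map f) :
    l₁ = l₂ := by
  induction l₁ generalizing l₂ with
  | nil => simpa [eq_comm] using e
  | cons a l₁ ih =>
    rcases l₂ with _ | ⟨b, l₂⟩
    · simp at e
    simp only [forall_mem_cons, map_cons, cons.injEq] at h₁ h₂ e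
    rw [hf h₁.1 h₂.1 e.1, ih h₁.2 h₂.2 e.2]

theorem List.exists_map_eq_of_forall_mem {α β : Type*} {f : α → β} {p : α → Prop} {l : List β}
    (h : ∀ y ∈ l, ∃ x, p x ∧ f x = y) : ∃ l' : List α, (∀ x ∈ l', p x) ∧ l'.map f = l := by
  induction l with
  | nil => exact ⟨[], by simp, rfl⟩
  | cons y l ih =>
    simp only [forall_mem_cons] at h
    obtain ⟨x, hx, rfl⟩ := h.1
    obtain ⟨l', hl', rfl⟩ := ih h.2
    exact ⟨x :: l', forall_mem_cons.2 ⟨hx, hl'⟩, rfl⟩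

/-- `EveryStepFrom P h w` says that the walk with steps `w` started at height `h` takes every
step `s` from a height `g` with `P g s`. -/
def EveryStepFrom (P : ℤ → ℤ → Prop) : ℤ → List ℤ → Prop
  | _, [] => True
  | h, s :: t => P h s ∧ EveryStepFrom P (h + s) t

section EveryStepFrom

variable {P Q R : ℤ → ℤ → Prop} {h : ℤ} {w : List ℤ}

@[simp] theorem everyStepFrom_nil : EveryStepFrom P h [] := trivial

@[simp] theorem everyStepFrom_cons {s : ℤ} :
    EveryStepFrom P h (s :: w) ↔ P h s ∧ EveryStepFrom P (h + s) w := Iff.rfl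

theorem everyStepFrom_append {x y : List ℤ} :
    EveryStepFrom P h (x ++ y) ↔ EveryStepFrom P h x ∧ EveryStepFrom P (h + x.sum) y := by
  induction x generalizing h with
  | nil => simp
  | cons s x ih => simp [ih, and_assoc, add_assoc]

@[simp] theorem everyStepFrom_and :
    EveryStepFrom (fun g s => P g s ∧ Q g s) h w ↔ EveryStepFrom P h w ∧ EveryStepFrom Q h w := by
  induction w generalizing h with
  | nil => simp
  | cons s w ih => simp only [everyStepFrom_cons, ih]; tauto

@[simp] theorem everyStepFrom_const {p : ℤ → Prop} :
    EveryStepFrom (fun _ s => p s) h w ↔ ∀ s ∈ w, p s := by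
  induction w generalizing h with
  | nil => simp
  | cons s w ih => simp [ih]

theorem everyStepFrom_iff_getElem? :
    EveryStepFrom P h w ↔ ∀ j s, w[j]? = some s → P (h + (w.take j).sum) s := by
  induction w generalizing h with
  | nil => simp
  | cons a w ih =>
    rw [everyStepFrom_cons, ih]
    constructor
    · rintro ⟨ha, hw⟩ (_ | j) s hs
      · simp only [getElem?_cons_zero, Option.some.injEq] at hs
        simpa [← hs] using ha
      · simpa [add_assoc] using hw j s (by simpa using hs)
    · intro H
      exact ⟨by simpa using H 0 a rfl, fun j s hs => by simpa [add_assoc] using H (j + 1) s hs⟩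

theorem EveryStepFrom.imp (hw : EveryStepFrom P h w) (H : ∀ g s, P g s → Q g s) :
    EveryStepFrom Q h w := by
  induction w generalizing h with
  | nil => trivial
  | cons s w ih => exact ⟨H h s hw.1, ih hw.2⟩

theorem EveryStepFrom.shift (hw : EveryStepFrom P h w) {d : ℤ} (H : ∀ g s, P g s → Q (g + d) s) :
    EveryStepFrom Q (h + d) w := by
  induction w generalizing h with
  | nil => trivial
  | cons s w ih => exact ⟨H h s hw.1, by simpa only [add_right_comm] using ih hw.2⟩

theorem EveryStepFrom.combine {h' : ℤ} (hP : EveryStepFrom P h w) (hQ : EveryStepFrom Q h' w)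
    (H : ∀ g s, P g s → Q (g + (h' - h)) s → R g s) : EveryStepFrom R h w := by
  induction w generalizing h h' with
  | nil => trivial
  | cons s w ih =>
    refine ⟨H h s hP.1 (by simpa using hQ.1), ih hP.2 hQ.2 fun g t hp hq => H g t hp ?_⟩
    simpa only [add_sub_add_right_eq_sub] using hq

theorem EveryStepFrom.add_sum_nonneg (hw : EveryStepFrom P h w) (hP : ∀ g s, P g s → 0 ≤ g + s)
    (h0 : 0 ≤ h) : 0 ≤ h + w.sum := by
  induction w generalizing h with
  | nil => simpa
  | cons s w ih => simpa [add_assoc] using ih hw.2 (hP h s hw.1)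

theorem forall_take_sum_nonneg_iff :
    (∀ k, 0 ≤ h + (w.take k).sum) ↔ 0 ≤ h ∧ EveryStepFrom (fun g s => 0 ≤ g + s) h w := by
  induction w generalizing h with
  | nil => simp
  | cons a w ih =>
    rw [everyStepFrom_cons, ← ih]
    constructor
    · intro H
      exact ⟨by simpa using H 0, fun k => by simpa [add_assoc] using H (k + 1)⟩
    · rintro ⟨h0, H⟩ (_ | k)
      · simpa
      · simpa [add_assoc] using H k

theorem exists_span (P : ℤ → ℤ → Prop) (h : ℤ) (r : List ℤ) :
    ∃ a b, r = a ++ b ∧ EveryStepFrom P h a ∧ ∀ s ∈ b.head?, ¬P (h + a.sum) s := by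
  induction r generalizing h with
  | nil => exact ⟨[], [], rfl, trivial, by simp⟩
  | cons s r ih =>
    by_cases hs : P h s
    · obtain ⟨a, b, rfl, ha, hb⟩ := ih (h + s)
      exact ⟨s :: a, b, rfl, ⟨hs, ha⟩, by simpa [add_assoc] using hb⟩
    · exact ⟨[], s :: r, rfl, trivial, by simpa using hs⟩

theorem eq_nil_of_everyStepFrom_append {a x y : List ℤ} (hax : EveryStepFrom P h (a ++ x))
    (hxy : ∀ s ∈ (x ++ y).head?, ¬P (h + a.sum) s) : x = [] := by
  cases x with
  | nil => rfl
  | cons s x => exact absurd (everyStepFrom_append.1 hax).2.1 (hxy s (by simp))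

theorem span_unique {a b a' b' : List ℤ} (e : a ++ b = a' ++ b')
    (ha : EveryStepFrom P h a) (hb : ∀ s ∈ b.head?, ¬P (h + a.sum) s)
    (ha' : EveryStepFrom P h a') (hb' : ∀ s ∈ b'.head?, ¬P (h + a'.sum) s) :
    a = a' ∧ b = b' := by
  rcases append_eq_append_iff.1 e with ⟨x, rfl, rfl⟩ | ⟨x, rfl, rfl⟩
  · obtain rfl := eq_nil_of_everyStepFrom_append ha' hb
    simp
  · obtain rfl := eq_nil_of_everyStepFrom_append ha hb'
    simp

theorem exists_first_passage {r : List ℤ} (hr : ∀ s ∈ r, -1 ≤ s) (hsum : r.sum < 0) :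
    ∃ x y, r = x ++ -1 :: y ∧ EveryStepFrom (fun g s => 0 ≤ g + s) 0 x ∧ x.sum = 0 := by
  obtain ⟨x, _ | ⟨s, y⟩, rfl, hx, hb⟩ := exists_span (fun g s => 0 ≤ g + s) 0 r
  · have := hx.add_sum_nonneg (fun _ _ => id) le_rfl
    rw [append_nil] at hsum
    omega
  · have hx0 := hx.add_sum_nonneg (fun _ _ => id) le_rfl
    have hs := hb s rfl
    have := hr s (by simp)
    obtain rfl : s = -1 := by omega
    exact ⟨x, y, rfl, hx, by omega⟩

end EveryStepFrom

/-- With `b = false` these are the steps of the blocks `L₂, …, L_k` in the recursion for `ψ`,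
which lie at positive height and so have no flat steps. -/
def CStep (b : Bool) (g s : ℤ) : Prop := -1 ≤ s ∧ 0 ≤ g + s ∧ (s = 0 → g = 0 ∧ b = true)

def MStep (b : Bool) (g s : ℤ) : Prop := -1 ≤ s ∧ s ≤ 1 ∧ 0 ≤ g + s ∧ (s = 0 → g = 0 → b = true)

structure IsCPath (b : Bool) (w : List ℤ) : Prop where
  steps : EveryStepFrom (CStep b) 0 w
  sum_eq_zero : w.sum = 0
  isChain : w.IsChain fun a c => 1 ≤ a → c = -1

structure IsMotzkinUU (b : Bool) (m : List ℤ) : Prop where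
  steps : EveryStepFrom (MStep b) 0 m
  sum_eq_zero : m.sum = 0
  isChain : m.IsChain fun a c => ¬(a = 1 ∧ c = 1)

theorem isLukas_iff {w : List ℤ} :
    IsLukas w ↔ (∀ s ∈ w, -1 ≤ s) ∧ EveryStepFrom (fun g s => 0 ≤ g + s) 0 w ∧ w.sum = 0 := by
  have := forall_take_sum_nonneg_iff (h := 0) (w := w)
  simp only [zero_add, le_refl, true_and] at this
  rw [IsLukas, this]

theorem IsCPath.isLukas {b : Bool} {w : List ℤ} (hw : IsCPath b w) : IsLukas w :=
  isLukas_iff.2 ⟨everyStepFrom_const.1 (hw.steps.imp fun _ _ hs => hs.1),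
    hw.steps.imp fun _ _ hs => hs.2.1, hw.sum_eq_zero⟩

theorem noFlatAtPosHeight_iff {w : List ℤ} :
    NoFlatAtPosHeight w ↔ EveryStepFrom (fun g s => s = 0 → g = 0) 0 w := by
  rw [everyStepFrom_iff_getElem?]
  simp only [zero_add, NoFlatAtPosHeight]
  constructor
  · rintro h j s hs rfl
    exact h j hs
  · exact fun h j hj => h j 0 hj rfl

theorem upThenDown_iff_isChain {w : List ℤ} (hw : IsLukas w) :
    UpThenDown w ↔ w.IsChain fun a c => 1 ≤ a → c = -1 := by
  rw [isChain_iff_getElem]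
  constructor
  · intro h i hi ha
    simpa [getElem?_eq_getElem hi] using h i w[i] (getElem?_eq_getElem (by omega)) ha
  · intro h j s hj hs
    obtain ⟨hjlt, rfl⟩ := List.getElem?_eq_some_iff.1 hj
    by_cases hj1 : j + 1 < w.length
    · rw [getElem?_eq_getElem hj1, h j hj1 hs]
    · -- the last step of a Łukasiewicz path cannot go up
      have hlast : (w.take (j + 1)).sum = (w.take j).sum + w[j] := sum_take_succ w j hjlt
      rw [take_of_length_le (by omega), hw.2.2] at hlast
      have := hw.2.1 j
      omega

theorem avoidsUU_iff_isChain {w : List ℤ} :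
    AvoidsUU w ↔ w.IsChain fun a c => ¬(a = 1 ∧ c = 1) := by
  rw [isChain_iff_getElem]
  constructor
  · intro h i hi hc
    exact h i ⟨by simp [getElem?_eq_getElem (show i < w.length by omega), hc.1],
      by simp [getElem?_eq_getElem hi, hc.2]⟩
  · rintro h j ⟨h1, h2⟩
    obtain ⟨hj, e2⟩ := List.getElem?_eq_some_iff.1 h2
    obtain ⟨_, e1⟩ := List.getElem?_eq_some_iff.1 h1
    exact h j hj ⟨e1, e2⟩

theorem isCPath_true_iff {w : List ℤ} :
    IsCPath true w ↔ IsLukas w ∧ NoFlatAtPosHeight w ∧ UpThenDown w := by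
  have hsteps : EveryStepFrom (CStep true) 0 w ↔ (∀ s ∈ w, -1 ≤ s) ∧
      EveryStepFrom (fun g s => 0 ≤ g + s) 0 w ∧ EveryStepFrom (fun g s => s = 0 → g = 0) 0 w := by
    have hC : CStep true = fun g s => -1 ≤ s ∧ 0 ≤ g + s ∧ (s = 0 → g = 0) := by
      funext g s
      simp [CStep]
    rw [hC]
    simp only [everyStepFrom_and, everyStepFrom_const]
  rw [noFlatAtPosHeight_iff]
  constructor
  · rintro ⟨hs, h0, hc⟩
    obtain ⟨h1, h2, h3⟩ := hsteps.1 hs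
    have hL := isLukas_iff.2 ⟨h1, h2, h0⟩
    exact ⟨hL, h3, (upThenDown_iff_isChain hL).2 hc⟩
  · rintro ⟨hL, hF, hU⟩
    obtain ⟨h1, h2, h0⟩ := isLukas_iff.1 hL
    exact ⟨hsteps.2 ⟨h1, h2, hF⟩, h0, (upThenDown_iff_isChain hL).1 hU⟩

theorem isMotzkinUU_true_iff {m : List ℤ} : IsMotzkinUU true m ↔ IsMotzkin m ∧ AvoidsUU m := by
  have hsteps : EveryStepFrom (MStep true) 0 m ↔
      (∀ s ∈ m, -1 ≤ s) ∧ (∀ s ∈ m, s ≤ 1) ∧ EveryStepFrom (fun g s => 0 ≤ g + s) 0 m := by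
    have hM : MStep true = fun g s => -1 ≤ s ∧ s ≤ 1 ∧ 0 ≤ g + s := by
      funext g s
      simp [MStep]
    rw [hM]
    simp only [everyStepFrom_and, everyStepFrom_const]
  rw [IsMotzkin, isLukas_iff, avoidsUU_iff_isChain]
  constructor
  · rintro ⟨hs, h0, hc⟩
    obtain ⟨h1, h2, h3⟩ := hsteps.1 hs
    exact ⟨⟨⟨h1, h3, h0⟩, h2⟩, hc⟩
  · rintro ⟨⟨⟨h1, h3, h0⟩, h2⟩, hc⟩
    exact ⟨hsteps.2 ⟨h1, h2, h3⟩, h0, hc⟩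

def joinDown (Ls : List (List ℤ)) : List ℤ := (Ls.map (· ++ [-1])).flatten

def joinFlat (Ms : List (List ℤ)) : List ℤ := (Ms.map (0 :: ·)).flatten

section Join

variable {M : List ℤ} {Ls Ms : List (List ℤ)}

@[simp] theorem joinDown_nil : joinDown [] = [] := rfl

@[simp] theorem joinDown_cons : joinDown (M :: Ls) = M ++ -1 :: joinDown Ls := by
  simp [joinDown]

@[simp] theorem joinFlat_nil : joinFlat [] = [] := rfl

@[simp] theorem joinFlat_cons : joinFlat (M :: Ms) = 0 :: (M ++ joinFlat Ms) := rfl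

theorem infix_joinDown (hM : M ∈ Ls) : M <:+: joinDown Ls :=
  (prefix_append M [-1]).isInfix.trans (infix_of_mem_flatten (mem_map_of_mem hM))

theorem infix_joinFlat (hM : M ∈ Ms) : M <:+: joinFlat Ms :=
  (suffix_cons 0 M).isInfix.trans (infix_of_mem_flatten (mem_map_of_mem hM))

theorem sum_joinDown (hLs : ∀ M ∈ Ls, M.sum = 0) : (joinDown Ls).sum = -Ls.length := by
  induction Ls with
  | nil => rfl
  | cons M Ls ih =>
    simp only [forall_mem_cons] at hLs
    simp [hLs.1, ih hLs.2]

theorem head?_joinFlat : ∀ s ∈ (joinFlat Ms).head?, s = 0 := by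
  cases Ms <;> simp

theorem length_joinFlat_map {f : List ℤ → List ℤ} (hf : ∀ M ∈ Ls, (f M).length = M.length) :
    (joinFlat (Ls.map f)).length = (joinDown Ls).length := by
  induction Ls with
  | nil => rfl
  | cons M Ls ih =>
    simp only [forall_mem_cons] at hf
    simp [hf.1, ih hf.2]
    omega

theorem flatten_intersperse_zero (x : List ℤ) :
    (intersperse [0] (x :: Ms)).flatten = x ++ joinFlat Ms := by
  induction Ms generalizing x with
  | nil => simp
  | cons M Ms ih => simp [intersperse_cons_cons, ih]

theorem length_lt_of_mem_joinDown {L : List ℤ} (hM : M ∈ Ls) (k : ℤ) :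
    M.length < (k :: -1 :: (joinDown Ls ++ L)).length := by
  have := (infix_joinDown hM).length_le
  simp only [length_cons, length_append]
  omega

theorem length_lt_of_mem_joinFlat {m : List ℤ} (hM : M ∈ Ms) :
    M.length < (1 :: (joinFlat Ms ++ -1 :: m)).length := by
  have := (infix_joinFlat hM).length_le
  simp only [length_cons, length_append]
  omega

end Join

theorem PsiEquations.up {ψ : List ℤ → List ℤ} (hψ : PsiEquations ψ) {Ls : List (List ℤ)}
    {L : List ℤ} (hLs : ∀ M ∈ Ls, IsLukas M) (hL : IsLukas L) :
    ψ (((Ls.length : ℤ) + 1) :: -1 :: (joinDown Ls ++ L)) =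
      1 :: (joinFlat (Ls.map ψ) ++ -1 :: ψ L) := by
  have hnil : IsLukas [] := ⟨by simp, by simp, rfl⟩
  have := hψ.2.2 ([] :: Ls) L (cons_ne_nil _ _) (forall_mem_cons.2 ⟨hnil, hLs⟩) hL
  simpa [hψ.1, flatten_intersperse_zero, joinDown] using this

theorem exists_joinDown_append (j : ℕ) {r : List ℤ} (hr : ∀ s ∈ r, -1 ≤ s) (hsum : r.sum ≤ -j) :
    ∃ Ls L, r = joinDown Ls ++ L ∧ Ls.length = j ∧
      ∀ M ∈ Ls, EveryStepFrom (fun g s => 0 ≤ g + s) 0 M ∧ M.sum = 0 := by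
  induction j generalizing r with
  | zero => exact ⟨[], r, rfl, rfl, by simp⟩
  | succ j ih =>
    obtain ⟨x, y, rfl, hx, hx0⟩ := exists_first_passage hr (by omega)
    rw [sum_append, sum_cons, hx0] at hsum
    obtain ⟨Ls, L, rfl, rfl, hLs⟩ := ih (r := y) (fun s hs => hr s (by simp [hs])) (by omega)
    exact ⟨x :: Ls, L, by simp, rfl, forall_mem_cons.2 ⟨⟨hx, hx0⟩, hLs⟩⟩

section JoinDown

variable {P : ℤ → ℤ → Prop} {Ls : List (List ℤ)} {L : List ℤ} {c : ℤ}

theorem EveryStepFrom.of_joinDown_append (hLs : ∀ M ∈ Ls, M.sum = 0)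
    (hw : EveryStepFrom P (Ls.length + c) (joinDown Ls ++ L)) :
    (∀ M ∈ Ls, ∃ d, c < d ∧ EveryStepFrom P d M) ∧ EveryStepFrom P c L := by
  induction Ls with
  | nil => simpa using hw
  | cons M Ls ih =>
    simp only [forall_mem_cons] at hLs ⊢
    rw [joinDown_cons, append_assoc, cons_append, everyStepFrom_append, everyStepFrom_cons] at hw
    obtain ⟨hM, -, hrest⟩ := hw
    have e : ((M :: Ls).length + c + M.sum + -1 : ℤ) = Ls.length + c := by
      simp only [length_cons, Nat.cast_add, Nat.cast_one, hLs.1]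
      ring
    obtain ⟨hMs, hL⟩ := ih hLs.2 (e ▸ hrest)
    exact ⟨⟨⟨_, by simp only [length_cons]; omega, hM⟩, hMs⟩, hL⟩

theorem EveryStepFrom.joinDown_append
    (hLs : ∀ M ∈ Ls, M.sum = 0 ∧ ∀ d, c < d → EveryStepFrom P d M)
    (hD : ∀ d, c < d → P d (-1)) (hL : EveryStepFrom P c L) :
    EveryStepFrom P (Ls.length + c) (joinDown Ls ++ L) := by
  induction Ls with
  | nil => simpa using hL
  | cons M Ls ih =>
    simp only [forall_mem_cons] at hLs
    rw [joinDown_cons, append_assoc, cons_append, everyStepFrom_append, everyStepFrom_cons]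
    have e : ((M :: Ls).length + c + M.sum + -1 : ℤ) = Ls.length + c := by
      simp only [length_cons, Nat.cast_add, Nat.cast_one, hLs.1.1]
      ring
    refine ⟨hLs.1.2 _ (by simp only [length_cons]; omega), hD _ (by simp only [length_cons]; omega),
      e ▸ ih hLs.2⟩

end JoinDown

theorem isChain_cons_joinDown_append {R : ℤ → ℤ → Prop} (hR : ∀ a, R a (-1) ∧ R (-1) a)
    {Ls : List (List ℤ)} {L : List ℤ} (hLs : ∀ M ∈ Ls, M.IsChain R) (hL : L.IsChain R) :
    (-1 :: (joinDown Ls ++ L)).IsChain R := by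
  induction Ls with
  | nil => exact isChain_cons.2 ⟨fun a _ => (hR a).2, hL⟩
  | cons M Ls ih =>
    simp only [forall_mem_cons] at hLs
    rw [joinDown_cons, append_assoc, cons_append, ← cons_append]
    refine (isChain_cons.2 ⟨fun a _ => (hR a).2, hLs.1⟩).append (ih hLs.2) ?_
    simp [(hR _).1]

theorem IsCPath.up {b : Bool} {Ls : List (List ℤ)} {L : List ℤ}
    (hLs : ∀ M ∈ Ls, IsCPath false M) (hL : IsCPath b L) :
    IsCPath b (((Ls.length : ℤ) + 1) :: -1 :: (joinDown Ls ++ L)) where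
  steps := by
    refine ⟨⟨by omega, by omega, by omega⟩, ⟨by omega, by omega, by omega⟩, ?_⟩
    have hblocks : ∀ M ∈ Ls, M.sum = 0 ∧ ∀ d, 0 < d → EveryStepFrom (CStep b) d M :=
      fun M hM => ⟨(hLs M hM).sum_eq_zero, fun d hd => by
        simpa using (hLs M hM).steps.shift (d := d) fun g s ⟨h1, h2, h3⟩ =>
          ⟨h1, by omega, fun hs => by simpa using (h3 hs).2⟩⟩
    simpa using EveryStepFrom.joinDown_append hblocks (fun d hd => ⟨le_rfl, by omega, by simp⟩)
      hL.steps
  sum_eq_zero := by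
    simp [sum_joinDown fun M hM => (hLs M hM).sum_eq_zero, hL.sum_eq_zero]
  isChain := isChain_cons_cons.2 ⟨fun _ => rfl,
    isChain_cons_joinDown_append (fun a => ⟨fun _ => rfl, fun h => by omega⟩)
      (fun M hM => (hLs M hM).isChain) hL.isChain⟩

theorem IsCPath.exists_up {b : Bool} {k : ℤ} {t : List ℤ} (hw : IsCPath b (k :: t)) (hk : k ≠ 0) :
    ∃ Ls L, k :: t = ((Ls.length : ℤ) + 1) :: -1 :: (joinDown Ls ++ L) ∧
      (∀ M ∈ Ls, IsCPath false M) ∧ IsCPath b L := by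
  obtain ⟨⟨-, hk0, -⟩, ht⟩ := hw.steps
  cases t with
  | nil => exact absurd (by simpa using hw.sum_eq_zero) hk
  | cons a r =>
  obtain rfl : a = -1 := (isChain_cons_cons.1 hw.isChain).1 (by omega)
  obtain ⟨j, rfl⟩ : ∃ j : ℕ, k = j + 1 := ⟨(k - 1).toNat, by omega⟩
  have hsum : (j : ℤ) + 1 + -1 + r.sum = 0 := by simpa [add_assoc] using hw.sum_eq_zero
  obtain ⟨Ls, L, rfl, rfl, hLs⟩ := exists_joinDown_append j
    (everyStepFrom_const.1 (ht.2.imp fun _ _ hs => hs.1)) (by omega)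
  obtain ⟨hMs, hL⟩ := EveryStepFrom.of_joinDown_append (c := 0) (fun M hM => (hLs M hM).2)
    (by simpa using ht.2)
  have hinfix : joinDown Ls ++ L <:+: ((Ls.length : ℤ) + 1) :: -1 :: (joinDown Ls ++ L) :=
    ⟨[(Ls.length : ℤ) + 1, -1], [], by simp⟩
  refine ⟨Ls, L, rfl, fun M hM => ⟨?_, (hLs M hM).2, ?_⟩, ⟨hL, ?_, ?_⟩⟩
  · obtain ⟨d, hd, hMd⟩ := hMs M hM
    exact (hLs M hM).1.combine hMd fun g s h1 ⟨h2, _, h4⟩ =>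
      ⟨h2, h1, fun hs => by have := (h4 hs).1; omega⟩
  · exact hw.isChain.infix ((infix_joinDown hM).trans ((prefix_append _ _).isInfix.trans hinfix))
  · rw [sum_append, sum_joinDown fun M hM => (hLs M hM).2] at hsum
    omega
  · exact hw.isChain.infix ((suffix_append _ _).isInfix.trans hinfix)

theorem isCPath_iff {b : Bool} {w : List ℤ} :
    IsCPath b w ↔ w = [] ∨ (b = true ∧ ∃ L, w = 0 :: L ∧ IsCPath b L) ∨
      ∃ Ls L, w = ((Ls.length : ℤ) + 1) :: -1 :: (joinDown Ls ++ L) ∧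
        (∀ M ∈ Ls, IsCPath false M) ∧ IsCPath b L := by
  constructor
  · intro hw
    rcases w with _ | ⟨k, L⟩
    · exact Or.inl rfl
    by_cases hk : k = 0
    · subst hk
      refine Or.inr (Or.inl ⟨(hw.steps.1.2.2 rfl).2, L, rfl, ?_, ?_, hw.isChain.tail⟩)
      · simpa using hw.steps.2
      · simpa using hw.sum_eq_zero
    · exact Or.inr (Or.inr (hw.exists_up hk))
  · rintro (rfl | ⟨hb, L, rfl, hL⟩ | ⟨Ls, L, rfl, hLs, hL⟩)
    · exact ⟨trivial, rfl, isChain_nil⟩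
    · exact ⟨⟨⟨by simp, by simp, fun _ => ⟨rfl, hb⟩⟩, by simpa using hL.steps⟩,
        by simpa using hL.sum_eq_zero, isChain_cons.2 ⟨by simp, hL.isChain⟩⟩
    · exact IsCPath.up hLs hL

theorem isMotzkinUU_joinFlat {Ms : List (List ℤ)} (hMs : ∀ M ∈ Ms, IsMotzkinUU false M) :
    IsMotzkinUU true (joinFlat Ms) := by
  induction Ms with
  | nil => exact ⟨trivial, rfl, isChain_nil⟩
  | cons M Ms ih =>
    simp only [forall_mem_cons] at hMs
    obtain ⟨hM, hMs⟩ := hMs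
    have hrest := ih hMs
    rw [joinFlat_cons]
    refine ⟨⟨⟨by omega, by omega, by omega, fun _ _ => rfl⟩, ?_⟩, ?_, ?_⟩
    · rw [everyStepFrom_append, hM.sum_eq_zero]
      exact ⟨by simpa using hM.steps.imp fun g s ⟨h1, h2, h3, _⟩ => ⟨h1, h2, h3, fun _ _ => rfl⟩,
        by simpa using hrest.steps⟩
    · simp [hM.sum_eq_zero, hrest.sum_eq_zero]
    · refine isChain_cons.2 ⟨by simp, hM.isChain.append hrest.isChain ?_⟩
      intro a _ c hc
      simp [head?_joinFlat c hc]

theorem IsMotzkinUU.up {b : Bool} {Ms : List (List ℤ)} {m : List ℤ}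
    (hMs : ∀ M ∈ Ms, IsMotzkinUU false M) (hm : IsMotzkinUU b m) :
    IsMotzkinUU b (1 :: (joinFlat Ms ++ -1 :: m)) := by
  have hA := isMotzkinUU_joinFlat hMs
  refine ⟨⟨⟨by omega, le_rfl, by omega, by omega⟩, ?_⟩, ?_, ?_⟩
  · rw [everyStepFrom_append, everyStepFrom_cons, hA.sum_eq_zero]
    refine ⟨by simpa using hA.steps.shift (d := 1) fun g s ⟨h1, h2, h3, _⟩ =>
      ⟨h1, h2, by omega, fun hs => by omega⟩, ⟨by omega, by omega, by omega, by omega⟩,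
      by simpa using hm.steps⟩
  · simp [hA.sum_eq_zero, hm.sum_eq_zero]
  · refine isChain_cons.2 ⟨?_, hA.isChain.append (isChain_cons.2 ⟨by simp, hm.isChain⟩) (by simp)⟩
    intro c hc
    rcases Ms with _ | ⟨M, Ms⟩ <;> simp at hc <;> omega

theorem joinFlat_injOn {Ms Ms' : List (List ℤ)} (hMs : ∀ M ∈ Ms, IsMotzkinUU false M)
    (hMs' : ∀ M ∈ Ms', IsMotzkinUU false M) (e : joinFlat Ms = joinFlat Ms') : Ms = Ms' := by
  induction Ms generalizing Ms' with
  | nil => cases Ms' <;> simp_all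
  | cons M Ms ih =>
    cases Ms' with
    | nil => simp at e
    | cons M' Ms' =>
      simp only [forall_mem_cons] at hMs hMs'
      simp only [joinFlat_cons, cons.injEq, true_and] at e
      have noFlat : ∀ {N : List ℤ}, IsMotzkinUU false N →
          EveryStepFrom (fun g s => s = 0 → g ≠ 0) 0 N := fun hN =>
        hN.steps.imp fun _ _ ⟨_, _, _, h4⟩ hs hg => by simpa using h4 hs hg
      have flatNext : ∀ {N : List ℤ} {Ns : List (List ℤ)}, IsMotzkinUU false N →
          ∀ s ∈ (joinFlat Ns).head?, ¬(s = 0 → 0 + N.sum ≠ 0) := fun hN s hs => by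
        simp [head?_joinFlat s hs, hN.sum_eq_zero]
      obtain ⟨rfl, e'⟩ := span_unique e (noFlat hMs.1) (flatNext hMs.1) (noFlat hMs'.1)
        (flatNext hMs'.1)
      rw [ih hMs.2 hMs'.2 e']

theorem IsMotzkinUU.up_inj {Ms Ms' : List (List ℤ)} {m m' : List ℤ}
    (hMs : ∀ M ∈ Ms, IsMotzkinUU false M) (hMs' : ∀ M ∈ Ms', IsMotzkinUU false M)
    (e : joinFlat Ms ++ -1 :: m = joinFlat Ms' ++ -1 :: m') : Ms = Ms' ∧ m = m' := by
  have nonneg : ∀ {Ns : List (List ℤ)}, (∀ M ∈ Ns, IsMotzkinUU false M) →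
      EveryStepFrom (fun g s => 0 ≤ g + s) 0 (joinFlat Ns) := fun hNs =>
    (isMotzkinUU_joinFlat hNs).steps.imp fun _ _ h => h.2.2.1
  have down : ∀ {Ns : List (List ℤ)} {n : List ℤ}, (∀ M ∈ Ns, IsMotzkinUU false M) →
      ∀ s ∈ (-1 :: n).head?, ¬0 ≤ 0 + (joinFlat Ns).sum + s := fun hNs s hs => by
    simp only [head?_cons, Option.mem_def, Option.some.injEq] at hs
    simp [(isMotzkinUU_joinFlat hNs).sum_eq_zero, ← hs]
  obtain ⟨e₁, e₂⟩ := span_unique e (nonneg hMs) (down hMs) (nonneg hMs') (down hMs')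
  exact ⟨joinFlat_injOn hMs hMs' e₁, (cons.inj e₂).2⟩

theorem IsMotzkinUU.exists_joinFlat {A : List ℤ} (hA : IsMotzkinUU true A)
    (hhead : ∀ s ∈ A.head?, s = 0) : ∃ Ms, A = joinFlat Ms ∧ ∀ M ∈ Ms, IsMotzkinUU false M := by
  induction hn : A.length using Nat.strong_induction_on generalizing A with
  | _ n ih =>
  rcases A with _ | ⟨s, A⟩
  · exact ⟨[], rfl, by simp⟩
  obtain rfl : s = 0 := hhead s rfl
  obtain ⟨M, rest, rfl, hM, hrest⟩ := exists_span (fun g s => s = 0 → g ≠ 0) 0 A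
  obtain ⟨hMs, hrs⟩ := everyStepFrom_append.1 (by simpa using hA.steps.2)
  have hsum : (M ++ rest).sum = 0 := by simpa using hA.sum_eq_zero
  have hMsum : M.sum = 0 := by
    rcases rest with _ | ⟨r, rest⟩
    · simpa using hsum
    · have := hrest r rfl
      omega
  have hM' : IsMotzkinUU false M :=
    ⟨hMs.combine hM fun g s ⟨h1, h2, h3, _⟩ h4 => ⟨h1, h2, h3, fun hs hg => by simp_all⟩,
      hMsum, hA.isChain.infix ⟨[0], rest, rfl⟩⟩
  have hrest' : IsMotzkinUU true rest :=
    ⟨by simpa [hMsum] using hrs, by simpa [hMsum] using hsum,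
      hA.isChain.infix ⟨0 :: M, [], by simp⟩⟩
  have hlen : rest.length < n := by
    subst hn
    simp only [length_cons, length_append]
    omega
  obtain ⟨Ms, rfl, hMs⟩ :=
    ih rest.length hlen hrest' (fun r hr => by_contra fun h => hrest r hr fun h' => absurd h' h) rfl
  exact ⟨M :: Ms, rfl, forall_mem_cons.2 ⟨hM', hMs⟩⟩

theorem IsMotzkinUU.exists_up {b : Bool} {t : List ℤ} (hm : IsMotzkinUU b (1 :: t)) :
    ∃ Ms m', t = joinFlat Ms ++ -1 :: m' ∧ (∀ M ∈ Ms, IsMotzkinUU false M) ∧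
      IsMotzkinUU b m' := by
  obtain ⟨-, ht⟩ := hm.steps
  obtain ⟨A, m', rfl, hA, hA0⟩ := exists_first_passage
    (everyStepFrom_const.1 (ht.imp fun _ _ hs => hs.1))
    (by have := hm.sum_eq_zero; simp only [sum_cons] at this; omega)
  rw [everyStepFrom_append, everyStepFrom_cons] at ht
  obtain ⟨hAs, -, hm's⟩ := ht
  have hA' : IsMotzkinUU true A :=
    ⟨hA.combine hAs fun g s h1 ⟨h2, h3, _⟩ => ⟨h2, h3, h1, fun _ _ => rfl⟩, hA0,
      hm.isChain.infix ⟨[1], -1 :: m', by simp⟩⟩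
  have hhead : ∀ s ∈ A.head?, s = 0 := by
    rcases A with _ | ⟨a, A⟩
    · simp
    · have h1 := (isChain_cons_cons.1 hm.isChain).1
      obtain ⟨⟨-, h2, h3, -⟩, -⟩ := hA'.steps
      simp only [head?_cons, Option.mem_def, Option.some.injEq, forall_eq']
      omega
  obtain ⟨Ms, rfl, hMs⟩ := hA'.exists_joinFlat hhead
  exact ⟨Ms, m', rfl, hMs, by simpa [hA0] using hm's, by simpa [hA0] using hm.sum_eq_zero,
    hm.isChain.infix ⟨1 :: (joinFlat Ms ++ [-1]), [], by simp⟩⟩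

theorem isMotzkinUU_iff {b : Bool} {m : List ℤ} :
    IsMotzkinUU b m ↔ m = [] ∨ (b = true ∧ ∃ m', m = 0 :: m' ∧ IsMotzkinUU b m') ∨
      ∃ Ms m', m = 1 :: (joinFlat Ms ++ -1 :: m') ∧ (∀ M ∈ Ms, IsMotzkinUU false M) ∧
        IsMotzkinUU b m' := by
  constructor
  · intro hm
    rcases m with _ | ⟨s, m'⟩
    · exact Or.inl rfl
    obtain ⟨⟨-, hs1, hs0, hflat⟩, -⟩ := hm.steps
    obtain rfl | rfl : s = 0 ∨ s = 1 := by omega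
    · refine Or.inr (Or.inl ⟨hflat rfl rfl, m', rfl, ?_, ?_, hm.isChain.tail⟩)
      · simpa using hm.steps.2
      · simpa using hm.sum_eq_zero
    · obtain ⟨Ms, m', rfl, hMs, hm'⟩ := hm.exists_up
      exact Or.inr (Or.inr ⟨Ms, m', rfl, hMs, hm'⟩)
  · rintro (rfl | ⟨hb, m', rfl, hm'⟩ | ⟨Ms, m', rfl, hMs, hm'⟩)
    · exact ⟨trivial, rfl, isChain_nil⟩
    · exact ⟨⟨⟨by omega, by omega, by omega, fun _ _ => hb⟩, by simpa using hm'.steps⟩,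
        by simpa using hm'.sum_eq_zero, isChain_cons.2 ⟨by simp, hm'.isChain⟩⟩
    · exact IsMotzkinUU.up hMs hm'

namespace PsiEquations

variable {ψ : List ℤ → List ℤ}

theorem isMotzkinUU_apply (hψ : PsiEquations ψ) {b : Bool} {w : List ℤ} (hw : IsCPath b w) :
    IsMotzkinUU b (ψ w) ∧ (ψ w).length = w.length := by
  induction hn : w.length using Nat.strong_induction_on generalizing b w with
  | _ n ih =>
  subst hn
  rcases isCPath_iff.1 hw with rfl | ⟨hb, L, rfl, hL⟩ | ⟨Ls, L, rfl, hLs, hL⟩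
  · rw [hψ.1]
    exact ⟨isMotzkinUU_iff.2 (Or.inl rfl), rfl⟩
  · obtain ⟨hψL, hlen⟩ := ih L.length (by simp) hL rfl
    rw [hψ.2.1 L hL.isLukas]
    exact ⟨isMotzkinUU_iff.2 (Or.inr (Or.inl ⟨hb, _, rfl, hψL⟩)), by simp [hlen]⟩
  · have hblocks M (hM : M ∈ Ls) := ih M.length (length_lt_of_mem_joinDown hM _) (hLs M hM) rfl
    obtain ⟨hψL, hlen⟩ := ih L.length (by simp only [length_cons, length_append]; omega) hL rfl
    rw [hψ.up (fun M hM => (hLs M hM).isLukas) hL.isLukas]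
    refine ⟨isMotzkinUU_iff.2 (Or.inr (Or.inr ⟨Ls.map ψ, ψ L, rfl, ?_, hψL⟩)), ?_⟩
    · simpa using fun M hM => (hblocks M hM).1
    · simp only [length_cons, length_append, length_joinFlat_map fun M hM => (hblocks M hM).2,
        hlen]
      omega

theorem length_eq_of_apply_eq (hψ : PsiEquations ψ) {b : Bool} {w₁ w₂ : List ℤ}
    (hw₁ : IsCPath b w₁) (hw₂ : IsCPath b w₂) (he : ψ w₁ = ψ w₂) : w₁.length = w₂.length := by
  rw [← (hψ.isMotzkinUU_apply hw₁).2, ← (hψ.isMotzkinUU_apply hw₂).2, he]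

theorem eq_of_apply_eq (hψ : PsiEquations ψ) {b : Bool} {w₁ w₂ : List ℤ} (hw₁ : IsCPath b w₁)
    (hw₂ : IsCPath b w₂) (he : ψ w₁ = ψ w₂) : w₁ = w₂ := by
  have hlen := hψ.length_eq_of_apply_eq hw₁ hw₂ he
  induction hn : w₁.length using Nat.strong_induction_on generalizing b w₁ w₂ with
  | _ n ih =>
  subst hn
  rcases isCPath_iff.1 hw₁ with rfl | ⟨-, L₁, rfl, hL₁⟩ | ⟨Ls₁, L₁, rfl, hLs₁, hL₁⟩ <;>
  rcases isCPath_iff.1 hw₂ with rfl | ⟨-, L₂, rfl, hL₂⟩ | ⟨Ls₂, L₂, rfl, hLs₂, hL₂⟩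
  · rfl
  · simp at hlen
  · simp at hlen
  · simp at hlen
  · rw [hψ.2.1 _ hL₁.isLukas, hψ.2.1 _ hL₂.isLukas, cons.injEq] at he
    rw [ih L₁.length (by simp) hL₁ hL₂ he.2 (by simpa using hlen) rfl]
  · rw [hψ.2.1 _ hL₁.isLukas, hψ.up (fun M hM => (hLs₂ M hM).isLukas) hL₂.isLukas] at he
    simp at he
  · simp at hlen
  · rw [hψ.2.1 _ hL₂.isLukas, hψ.up (fun M hM => (hLs₁ M hM).isLukas) hL₁.isLukas] at he
    simp at he
  · rw [hψ.up (fun M hM => (hLs₁ M hM).isLukas) hL₁.isLukas,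
      hψ.up (fun M hM => (hLs₂ M hM).isLukas) hL₂.isLukas, cons.injEq] at he
    obtain ⟨eLs, eL⟩ := IsMotzkinUU.up_inj
      (by simpa using fun M hM => (hψ.isMotzkinUU_apply (hLs₁ M hM)).1)
      (by simpa using fun M hM => (hψ.isMotzkinUU_apply (hLs₂ M hM)).1) he.2
    have hinj : Set.InjOn ψ {M | M.length < _ ∧ IsCPath false M} := fun M₁ hM₁ M₂ hM₂ e =>
      ih M₁.length hM₁.1 hM₁.2 hM₂.2 e (hψ.length_eq_of_apply_eq hM₁.2 hM₂.2 e) rfl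
    have hLlen : L₁.length = L₂.length := hψ.length_eq_of_apply_eq hL₁ hL₂ eL
    rw [List.eq_of_map_eq_of_injOn hinj (fun M hM => ⟨length_lt_of_mem_joinDown hM _, hLs₁ M hM⟩)
      (fun M hM => ⟨hlen ▸ length_lt_of_mem_joinDown hM _, hLs₂ M hM⟩) eLs,
      ih L₁.length (by simp only [length_cons, length_append]; omega) hL₁ hL₂ eL hLlen rfl]

theorem exists_isCPath_apply_eq (hψ : PsiEquations ψ) {b : Bool} {m : List ℤ}
    (hm : IsMotzkinUU b m) :
    ∃ w, IsCPath b w ∧ ψ w = m := by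
  induction hn : m.length using Nat.strong_induction_on generalizing b m with
  | _ n ih =>
  subst hn
  rcases isMotzkinUU_iff.1 hm with rfl | ⟨hb, m', rfl, hm'⟩ | ⟨Ms, m', rfl, hMs, hm'⟩
  · exact ⟨[], isCPath_iff.2 (Or.inl rfl), hψ.1⟩
  · obtain ⟨L, hL, rfl⟩ := ih _ (by simp) hm' rfl
    exact ⟨0 :: L, isCPath_iff.2 (Or.inr (Or.inl ⟨hb, L, rfl, hL⟩)), hψ.2.1 L hL.isLukas⟩
  · obtain ⟨Ls, hLs, rfl⟩ := List.exists_map_eq_of_forall_mem fun M hM =>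
      ih M.length (length_lt_of_mem_joinFlat hM) (hMs M hM) rfl
    obtain ⟨L, hL, rfl⟩ := ih _ (by simp only [length_cons, length_append]; omega) hm' rfl
    exact ⟨_, isCPath_iff.2 (Or.inr (Or.inr ⟨Ls, L, rfl, hLs, hL⟩)),
      hψ.up (fun M hM => (hLs M hM).isLukas) hL.isLukas⟩

end PsiEquations

theorem psi_bij_C_to_avoidUU (ψ : List ℤ → List ℤ) (hψ : PsiEquations ψ) (n : ℕ) :
    Set.BijOn ψ
      {w : List ℤ | IsLukas w ∧ NoFlatAtPosHeight w ∧ UpThenDown w ∧ w.length = n}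
      {w : List ℤ | IsMotzkin w ∧ AvoidsUU w ∧ w.length = n} := by
  have hC : {w : List ℤ | IsLukas w ∧ NoFlatAtPosHeight w ∧ UpThenDown w ∧ w.length = n} =
      {w | IsCPath true w ∧ w.length = n} := by
    ext w
    simp [isCPath_true_iff, and_assoc]
  have hM : {w : List ℤ | IsMotzkin w ∧ AvoidsUU w ∧ w.length = n} =
      {m | IsMotzkinUU true m ∧ m.length = n} := by
    ext m
    simp [isMotzkinUU_true_iff, and_assoc]
  rw [hC, hM]
  refine ⟨fun w ⟨hw, hn⟩ => ⟨(hψ.isMotzkinUU_apply hw).1, (hψ.isMotzkinUU_apply hw).2.trans hn⟩,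
    fun w₁ hw₁ w₂ hw₂ => hψ.eq_of_apply_eq hw₁.1 hw₂.1, fun m ⟨hm, hn⟩ => ?_⟩
  obtain ⟨w, hw, rfl⟩ := hψ.exists_isCPath_apply_eq hm
  exact ⟨w, ⟨hw, (hψ.isMotzkinUU_apply hw).2.symm.trans hn⟩, rfl⟩
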